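/- arXiv:1912.04422 — 4 statements merged into one kernel-verified Lean document; each statement's English description precedes it below -/
import Mathlib

section
/- Initial value theorem for the Laplace transform: let f : ℝ → ℝ be measurable on (0,∞) and satisfy |f(t)| ≤ C·exp(a·t) for all t > 0 (for some constants C ≥ 0 and a ∈ ℝ), and suppose f(t) tends to a limit L ∈ ℝ as t → 0⁺. Then s·∫₀^∞ e^{-s t} f(t) dt tends to L as s → ∞. -/
open MeasureTheory Filter Real Set

/-- Initial value theorem for the Laplace transform: if `f` is measurable on `(0,∞)`,
of exponential order (`|f t| ≤ C * exp (a * t)` for `t > 0`), and `f t → L` as `t → 0⁺`,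
then `s * ∫₀^∞ exp (-s*t) * f t dt → L` as `s → ∞`. -/
theorem laplace_initial_value_theorem
    (f : ℝ → ℝ) (C a L : ℝ) (hC : 0 ≤ C)
    (hmeas : AEStronglyMeasurable f (volume.restrict (Set.Ioi (0 : ℝ))))
    (hbound : ∀ t > (0 : ℝ), |f t| ≤ C * Real.exp (a * t))
    (hlim : Tendsto f (nhdsWithin 0 (Set.Ioi 0)) (nhds L)) :
    Tendsto (fun s : ℝ => s * ∫ t in Set.Ioi (0 : ℝ), Real.exp (-s * t) * f t)
      atTop (nhds L) := by
  -- quasi-measure-preserving scaling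
  have hqmp : ∀ s : ℝ, 0 < s → Measure.QuasiMeasurePreserving (fun u : ℝ => u / s)
      (volume.restrict (Set.Ioi 0)) (volume.restrict (Set.Ioi 0)) := by
    intro s hs
    have hmeq : (fun u : ℝ => u / s) = (fun u : ℝ => s⁻¹ * u) := by
      funext u; rw [div_eq_inv_mul]
    have hmeas' : Measurable (fun u : ℝ => u / s) := measurable_id.div_const s
    refine ⟨hmeas', ?_⟩
    have h1 : (fun u : ℝ => u / s) ⁻¹' (Set.Ioi 0) = Set.Ioi 0 := by
      ext u
      simp only [Set.mem_preimage, Set.mem_Ioi]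
      constructor
      · intro h
        by_contra hc
        push_neg at hc
        have : u / s ≤ 0 := div_nonpos_of_nonpos_of_nonneg hc hs.le
        linarith
      · intro h; exact div_pos h hs
    have h2 : Measure.map (fun u : ℝ => u / s) (volume.restrict (Set.Ioi 0))
        = (Measure.map (fun u : ℝ => s⁻¹ * u) volume).restrict (Set.Ioi 0) := by
      rw [Measure.restrict_map (by measurability) measurableSet_Ioi]
      rw [hmeq] at h1 ⊢
      rw [h1]
    rw [h2, Real.map_volume_mul_left (by positivity : (s:ℝ)⁻¹ ≠ 0),
      Measure.restrict_smul]
    exact Measure.smul_absolutelyContinuous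
  have key : Tendsto (fun s : ℝ => ∫ u in Set.Ioi (0:ℝ), Real.exp (-u) * f (u / s))
      atTop (nhds L) := by
    have hL : (∫ u in Set.Ioi (0:ℝ), Real.exp (-u) * L) = L := by
      rw [integral_mul_const, integral_exp_neg_Ioi_zero, one_mul]
    rw [← hL]
    apply tendsto_integral_filter_of_dominated_convergence
      (bound := fun u => C * Real.exp (-(1/2) * u))
    · -- measurability
      filter_upwards [eventually_gt_atTop (0:ℝ)] with s hs
      exact (Real.continuous_exp.comp continuous_neg).aestronglyMeasurable.mul
        (hmeas.comp_quasiMeasurePreserving (hqmp s hs))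
    · -- bound
      filter_upwards [eventually_ge_atTop (2 * |a| + 1)] with s hs
      have hs0 : 0 < s := lt_of_lt_of_le (by positivity) hs
      refine (ae_restrict_iff' measurableSet_Ioi).2 (Filter.Eventually.of_forall ?_)
      intro u hu
      have hu0 : 0 < u := hu
      have hus : 0 < u / s := div_pos hu0 hs0
      have h1 : |Real.exp (-u) * f (u / s)| = Real.exp (-u) * |f (u / s)| := by
        rw [abs_mul, abs_of_pos (Real.exp_pos _)]
      rw [Real.norm_eq_abs, h1]
      have h2 : |f (u / s)| ≤ C * Real.exp (a * (u / s)) := hbound _ hus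
      have h3 : a * (u / s) ≤ u / 2 := by
        have h4 : a * (u / s) ≤ |a| * (u / s) :=
          mul_le_mul_of_nonneg_right (le_abs_self a) hus.le
        have h5 : |a| / s ≤ 1 / 2 := by
          rw [div_le_div_iff₀ hs0 (by norm_num)]
          nlinarith [abs_nonneg a]
        calc a * (u / s) ≤ |a| * (u / s) := h4
          _ = (|a| / s) * u := by ring
          _ ≤ (1/2) * u := mul_le_mul_of_nonneg_right h5 hu0.le
          _ = u / 2 := by ring
      calc Real.exp (-u) * |f (u / s)| ≤ Real.exp (-u) * (C * Real.exp (a * (u/s))) :=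
            mul_le_mul_of_nonneg_left h2 (Real.exp_pos _).le
        _ = C * Real.exp (-u + a * (u/s)) := by rw [Real.exp_add]; ring
        _ ≤ C * Real.exp (-(1/2) * u) := by
            apply mul_le_mul_of_nonneg_left _ hC
            apply Real.exp_le_exp.2
            linarith
    · -- integrability of bound
      exact (exp_neg_integrableOn_Ioi 0 (by norm_num : (0:ℝ) < 1/2)).const_mul C
    · -- pointwise convergence
      refine (ae_restrict_iff' measurableSet_Ioi).2 (Filter.Eventually.of_forall ?_)
      intro u hu
      have hu0 : 0 < u := hu
      have htend : Tendsto (fun s : ℝ => u / s) atTop (nhdsWithin 0 (Set.Ioi 0)) := by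
        apply tendsto_nhdsWithin_of_tendsto_nhds_of_eventually_within
        · exact tendsto_const_nhds.div_atTop tendsto_id
        · filter_upwards [eventually_gt_atTop (0:ℝ)] with s hs
          exact div_pos hu0 hs
      exact tendsto_const_nhds.mul (hlim.comp htend)
  -- Step 2: transfer by change of variables
  apply key.congr'
  filter_upwards [eventually_gt_atTop (0:ℝ)] with s hs
  have := integral_comp_mul_left_Ioi (fun u => Real.exp (-u) * f (u / s)) 0 hs
  simp only [mul_zero] at this
  have heq : (fun t : ℝ => Real.exp (-(s * t)) * f (s * t / s)) =
      (fun t : ℝ => Real.exp (-s * t) * f t) := by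
    funext t
    rw [mul_div_cancel_left₀ _ hs.ne', neg_mul]
  rw [← heq, this, smul_eq_mul, ← mul_assoc, mul_inv_cancel₀ hs.ne', one_mul]
end

section
/- A fractional-derivative kernel satisfying the initial-condition criterion cannot be non-singular: let Ψ : ℝ → ℝ be measurable on (0,∞) and satisfy |Ψ(t)| ≤ C·exp(a·t) for all t > 0 (for some constants C ≥ 0 and a ∈ ℝ), and let ψ(s) = ∫₀^∞ e^{-s t} Ψ(t) dt. If Ψ(t) tends to a finite nonzero limit L as t → 0⁺, then (s·ψ(s))⁻¹ tends to L⁻¹ ≠ 0 as s → ∞; in particular the condition lim_{s→∞} (s·ψ(s))⁻¹ = 0, which is necessary for solutions of the fractional diffusion equation to satisfy an arbitrary initial condition, fails. -/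
open MeasureTheory Filter Real Set

/-- A kernel `Ψ` that is non-singular (i.e. `Ψ t → L ≠ 0` finite as `t → 0⁺`) cannot satisfy
the initial-condition criterion `lim_{s→∞} (s * ψ s)⁻¹ = 0`: in fact
`(s * ψ s)⁻¹ → L⁻¹ ≠ 0` as `s → ∞`, where `ψ` is the Laplace transform of `Ψ`. -/
theorem nonsingular_kernel_fails_initial_condition
    (Ψ : ℝ → ℝ) (C a L : ℝ) (hC : 0 ≤ C)
    (hmeas : AEStronglyMeasurable Ψ (volume.restrict (Set.Ioi (0 : ℝ))))
    (hbound : ∀ t > (0 : ℝ), |Ψ t| ≤ C * Real.exp (a * t))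
    (hL : L ≠ 0)
    (hlim : Tendsto Ψ (nhdsWithin 0 (Set.Ioi 0)) (nhds L))
    (ψ : ℝ → ℝ)
    (hψ : ∀ s : ℝ, ψ s = ∫ t in Set.Ioi (0 : ℝ), Real.exp (-s * t) * Ψ t) :
    Tendsto (fun s : ℝ => (s * ψ s)⁻¹) atTop (nhds L⁻¹) ∧ L⁻¹ ≠ 0 := by
  refine ⟨?_, inv_ne_zero hL⟩
  -- Step 1: change of variables, for `s > 0`:
  -- `s * ψ s = ∫ u in Ioi 0, exp (-u) * Ψ (u / s)`.
  have key : ∀ s : ℝ, 0 < s →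
      s * ψ s = ∫ u in Ioi (0 : ℝ), Real.exp (-u) * Ψ (u / s) := by
    intro s hs
    have h2 := integral_comp_mul_left_Ioi
      (fun x : ℝ => Real.exp (-x) * Ψ (x / s)) 0 hs
    have h1 : ψ s = ∫ t in Ioi (0 : ℝ),
        (fun x : ℝ => Real.exp (-x) * Ψ (x / s)) (s * t) := by
      rw [hψ s]
      refine setIntegral_congr_fun measurableSet_Ioi fun t _ => ?_
      simp [mul_div_cancel_left₀ _ hs.ne', neg_mul]
    rw [h1, h2, mul_zero, smul_eq_mul, ← mul_assoc, mul_inv_cancel₀ hs.ne', one_mul]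
  -- Step 2: measurability of the integrand for each `s > 0`.
  have hcomp : ∀ s : ℝ, 0 < s →
      AEStronglyMeasurable (fun u => Real.exp (-u) * Ψ (u / s))
        (volume.restrict (Ioi (0 : ℝ))) := by
    intro s hs
    have hpre : (fun u : ℝ => s⁻¹ * u) ⁻¹' (Ioi (0 : ℝ)) = Ioi (0 : ℝ) := by
      ext u
      simp only [mem_preimage, mem_Ioi]
      constructor
      · intro h
        have := mul_pos hs h
        rwa [← mul_assoc, mul_inv_cancel₀ hs.ne', one_mul] at this
      · intro h; exact mul_pos (inv_pos.2 hs) h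
    have hmap : Measure.map (fun u : ℝ => s⁻¹ * u) (volume.restrict (Ioi (0 : ℝ)))
        = ENNReal.ofReal |s| • volume.restrict (Ioi (0 : ℝ)) := by
      conv_lhs => rw [← hpre]
      rw [← Measure.restrict_map (measurable_const_mul s⁻¹) measurableSet_Ioi,
        Real.map_volume_mul_left (inv_ne_zero hs.ne'), Measure.restrict_smul]
      congr 1
      rw [inv_inv]
    have hqmp : Measure.QuasiMeasurePreserving (fun u : ℝ => u / s)
        (volume.restrict (Ioi (0 : ℝ))) (volume.restrict (Ioi (0 : ℝ))) := by
      refine ⟨measurable_id.div_const s, ?_⟩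
      have : (fun u : ℝ => u / s) = fun u : ℝ => s⁻¹ * u := by
        ext u; rw [div_eq_inv_mul]
      rw [this, hmap]
      refine Measure.AbsolutelyContinuous.mk fun t ht h0 => ?_
      simp [h0]
    exact (Real.continuous_exp.comp continuous_neg).aestronglyMeasurable.mul
      (hmeas.comp_quasiMeasurePreserving hqmp)
  -- Step 3: dominated convergence: `∫ exp(-u) Ψ(u/s) du → ∫ exp(-u) L du = L`.
  have hDCT : Tendsto (fun s : ℝ => ∫ u in Ioi (0 : ℝ), Real.exp (-u) * Ψ (u / s))
      atTop (nhds L) := by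
    have hInt : (∫ u in Ioi (0 : ℝ), Real.exp (-u) * L) = L := by
      rw [integral_mul_const, integral_exp_neg_Ioi_zero, one_mul]
    rw [← hInt]
    refine tendsto_integral_filter_of_dominated_convergence
      (fun u => C * Real.exp (-(1/2) * u)) ?_ ?_ ?_ ?_
    · filter_upwards [eventually_gt_atTop 0] with s hs using hcomp s hs
    · filter_upwards [eventually_ge_atTop (max 1 (2 * |a|))] with s hs
      have hs1 : (1 : ℝ) ≤ s := le_trans (le_max_left _ _) hs
      have hs0 : 0 < s := lt_of_lt_of_le one_pos hs1
      have hsa : 2 * |a| ≤ s := le_trans (le_max_right _ _) hs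
      refine (ae_restrict_iff' measurableSet_Ioi).2 ?_
      filter_upwards with u hu
      have hu0 : 0 < u := hu
      have hus : 0 < u / s := div_pos hu0 hs0
      have hb := hbound (u / s) hus
      have h2 : a * (u / s) ≤ u / 2 := by
        calc a * (u / s) ≤ |a| * (u / s) :=
              mul_le_mul_of_nonneg_right (le_abs_self a) hus.le
          _ ≤ (s / 2) * (u / s) := by
              refine mul_le_mul_of_nonneg_right ?_ hus.le
              linarith
          _ = u / 2 := by field_simp
      have hle : ‖Real.exp (-u) * Ψ (u / s)‖ ≤ Real.exp (-u) * (C * Real.exp (u / 2)) := by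
        rw [norm_mul, Real.norm_eq_abs, Real.norm_eq_abs, abs_of_pos (Real.exp_pos _)]
        refine mul_le_mul_of_nonneg_left ?_ (Real.exp_pos _).le
        exact hb.trans (mul_le_mul_of_nonneg_left (Real.exp_le_exp.2 h2) hC)
      refine hle.trans (le_of_eq ?_)
      rw [mul_left_comm, ← Real.exp_add]
      congr 1
      ring
    · exact (exp_neg_integrableOn_Ioi 0 (by norm_num : (0:ℝ) < 1/2)).const_mul C
    · refine (ae_restrict_iff' measurableSet_Ioi).2 ?_
      filter_upwards with u hu
      have hu0 : 0 < u := hu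
      have h1 : Tendsto (fun s : ℝ => u / s) atTop (nhdsWithin 0 (Ioi 0)) := by
        refine tendsto_nhdsWithin_of_tendsto_nhds_of_eventually_within _
          (tendsto_const_nhds.div_atTop tendsto_id) ?_
        filter_upwards [eventually_gt_atTop 0] with s hs
        exact div_pos hu0 hs
      exact tendsto_const_nhds.mul (hlim.comp h1)
  -- Step 4: conclude.
  have hmul : Tendsto (fun s : ℝ => s * ψ s) atTop (nhds L) := by
    refine hDCT.congr' ?_
    filter_upwards [eventually_gt_atTop 0] with s hs using (key s hs).symm
  exact hmul.inv₀ hL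
end

section
/- The Atangana–Baleanu kernel fails the singularity condition: for 0 < α < 1, τ > 0, M > 0, define ψ(s) = M·s^{α−1}/((1−α)·sᵅ + α·τ^{−α}) for s > 0. Then (s·ψ(s))⁻¹ tends to (1−α)/M as s → ∞; in particular, since (1−α)/M ≠ 0, the necessary condition lim_{s→∞} (s·ψ(s))⁻¹ = 0 holds only in the limit α = 1. -/
open Filter Real Topology

theorem inv_mul_rpow_sub_one_div_eq {α a b M s : ℝ} (hs : 0 < s) (hM : M ≠ 0) :
    (s * (M * s ^ (α - 1) / (a * s ^ α + b)))⁻¹ = a / M + b / M * s ^ (-α) := by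
  have hsα : s ^ α ≠ 0 := (rpow_pos_of_pos hs α).ne'
  have hpow : s * s ^ (α - 1) = s ^ α := by
    rw [mul_comm, ← rpow_add_one hs.ne', sub_add_cancel]
  rw [← mul_div_assoc, mul_left_comm, hpow, inv_div, rpow_neg hs.le]
  field_simp

theorem tendsto_const_add_mul_rpow_neg_atTop {α : ℝ} (hα : 0 < α) (c d : ℝ) :
    Tendsto (fun s : ℝ => c + d * s ^ (-α)) atTop (𝓝 c) := by
  simpa using ((tendsto_rpow_neg_atTop hα).const_mul d).const_add c

theorem atangana_baleanu_fails_singularity_condition_general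
    (α τ M : ℝ) (hα0 : 0 < α) (hα1 : α < 1) (hM : 0 < M)
    (ψ : ℝ → ℝ)
    (hψ : ∀ s > (0 : ℝ), ψ s = M * s ^ (α - 1) / ((1 - α) * s ^ α + α * τ ^ (-α))) :
    Tendsto (fun s : ℝ => (s * ψ s)⁻¹) atTop (nhds ((1 - α) / M))
      ∧ (1 - α) / M ≠ 0 := by
  refine ⟨?_, div_ne_zero (sub_pos.2 hα1).ne' hM.ne'⟩
  refine (tendsto_const_add_mul_rpow_neg_atTop hα0 _ (α * τ ^ (-α) / M)).congr' ?_
  filter_upwards [eventually_gt_atTop 0] with s hs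
  rw [hψ s hs, inv_mul_rpow_sub_one_div_eq hs hM.ne']

/-- The Atangana–Baleanu kernel fails the singularity condition: with
`ψ s = M s^{α-1} / ((1-α) sᵅ + α τ^{-α})`, one has `(s * ψ s)⁻¹ → (1-α)/M ≠ 0`
as `s → ∞`. -/
theorem atangana_baleanu_fails_singularity_condition
    (α τ M : ℝ) (hα0 : 0 < α) (hα1 : α < 1) (hτ : 0 < τ) (hM : 0 < M)
    (ψ : ℝ → ℝ)
    (hψ : ∀ s > (0 : ℝ), ψ s = M * s ^ (α - 1) / ((1 - α) * s ^ α + α * τ ^ (-α))) :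
    Tendsto (fun s : ℝ => (s * ψ s)⁻¹) atTop (nhds ((1 - α) / M))
      ∧ (1 - α) / M ≠ 0 :=
  atangana_baleanu_fails_singularity_condition_general α τ M hα0 hα1 hM ψ hψ
end

section
/- Laplace transform of the Prabhakar kernel: for α > 0, β > 0, γ > 0, λ ∈ ℝ and every s > 0 with sᵅ > |λ|, ∫₀^∞ e^{-s t} · t^{β−1} · E^γ_{α,β}(λ tᵅ) dt = s^{αγ−β} / (sᵅ − λ)^γ, where E^γ_{α,β}(z) = ∑_{n=0}^∞ (Γ(γ+n)/Γ(γ)) zⁿ/(n! Γ(α n + β)) and all powers are real powers. -/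
/-!
Expanding the Prabhakar function and integrating term by term, the `n`-th term becomes a
Gamma integral `∫₀^∞ t^(αn+β-1) e^(-st) dt = Γ(αn+β) / s^(αn+β)`, which cancels the
`Γ(αn+β)` of the coefficient. What remains is `s^(-β) ∑ (γ)ₙ / n! · (λ / sᵅ)ⁿ`, the binomial
series of `s^(-β) (1 - λ / sᵅ)^(-γ)`. Since `|λ| / sᵅ < 1`, the series of absolute values is
again a convergent binomial series, which justifies the interchange of sum and integral.
-/

open MeasureTheory Real Set

theorem Ring.choose_add_nat_sub_one_mul_factorial {R : Type*} [Ring R] [BinomialRing R]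
    (r : R) (n : ℕ) : Ring.choose (r + n - 1) n * n.factorial = (ascPochhammer R n).eval r := by
  rw [← Ring.multichoose_eq, ← Nat.cast_comm, ← nsmul_eq_mul,
    Ring.factorial_nsmul_multichoose_eq_ascPochhammer, Polynomial.ascPochhammer_smeval_eq_eval]

namespace Real

theorem Gamma_add_nat_eq_ascPochhammer_eval_mul {γ : ℝ} (hγ : ∀ k : ℕ, γ ≠ -k) (n : ℕ) :
    Gamma (γ + n) = (ascPochhammer ℝ n).eval γ * Gamma γ := by
  induction n with
  | zero => simp
  | succ n ih =>
    have hγn : γ + n ≠ 0 := fun h => hγ n (eq_neg_of_add_eq_zero_left h)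
    rw [Nat.cast_succ, ← add_assoc, Gamma_add_one hγn, ih, ascPochhammer_succ_right,
      Polynomial.eval_mul]
    simp only [Polynomial.eval_add, Polynomial.eval_X, Polynomial.eval_natCast]
    ring

theorem hasSum_Gamma_add_nat_div_factorial_mul_pow {γ x : ℝ} (hγ : ∀ k : ℕ, γ ≠ -k)
    (hx : |x| < 1) :
    HasSum (fun n : ℕ => Gamma (γ + n) / n.factorial * x ^ n) (Gamma γ / (1 - x) ^ γ) := by
  have hx' : ‖x‖₊ < 1 := by rw [← NNReal.coe_lt_coe]; simpa using hx
  have h := (one_div_one_sub_rpow_hasFPowerSeriesOnBall_zero γ).hasSum (y := x)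
    (by simpa [enorm_eq_nnnorm] using hx')
  simp only [FormalMultilinearSeries.ofScalars_apply_eq, smul_eq_mul, zero_add] at h
  rw [div_eq_mul_one_div]
  refine (h.mul_left (Gamma γ)).congr_fun fun n => ?_
  rw [Gamma_add_nat_eq_ascPochhammer_eval_mul hγ, ← Ring.choose_add_nat_sub_one_mul_factorial]
  field_simp

theorem hasSum_integral_tsum_rpow_mul_exp_neg_mul_Ioi {a c : ℕ → ℝ} {s : ℝ}
    (hc : ∀ n, 0 < c n) (hs : 0 < s)
    (hsum : Summable fun n => a n * ((1 / s) ^ c n * Gamma (c n))) :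
    HasSum (fun n => a n * ((1 / s) ^ c n * Gamma (c n)))
      (∫ t in Ioi 0, ∑' n, a n * (t ^ (c n - 1) * exp (-(s * t)))) := by
  have hint (n : ℕ) : IntegrableOn (fun t => t ^ (c n - 1) * exp (-(s * t))) (Ioi 0) :=
    .of_integral_ne_zero <| by
      have := hc n
      rw [integral_rpow_mul_exp_neg_mul_Ioi this hs]
      positivity
  have hnorm (n : ℕ) : ∫ t in Ioi 0, ‖a n * (t ^ (c n - 1) * exp (-(s * t)))‖
      = |a n * ((1 / s) ^ c n * Gamma (c n))| := by
    rw [setIntegral_congr_fun measurableSet_Ioi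
      (g := fun t => |a n| * (t ^ (c n - 1) * exp (-(s * t)))) fun t ht => by
        simp [abs_of_pos (rpow_pos_of_pos (mem_Ioi.mp ht) _)],
      integral_const_mul, integral_rpow_mul_exp_neg_mul_Ioi (hc n) hs, abs_mul,
      abs_of_pos (by have := hc n; positivity : 0 < (1 / s) ^ c n * Gamma (c n))]
  have := hasSum_integral_of_summable_integral_norm (fun n => (hint n).const_mul (a n))
    (by simpa only [hnorm] using hsum.abs)
  simpa only [integral_const_mul, integral_rpow_mul_exp_neg_mul_Ioi (hc _) hs] using this

theorem integral_exp_neg_mul_rpow_mul_tsum_pow_Ioi {α β s l : ℝ} {b : ℕ → ℝ} (hα : 0 ≤ α)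
    (hβ : 0 < β) (hs : 0 < s)
    (hsum : Summable fun n => b n * Gamma (α * n + β) * (l / s ^ α) ^ n) :
    ∫ t in Ioi 0, exp (-s * t) * t ^ (β - 1) * ∑' n : ℕ, b n * (l * t ^ α) ^ n
      = (∑' n : ℕ, b n * Gamma (α * n + β) * (l / s ^ α) ^ n) / s ^ β := by
  have hc (n : ℕ) : 0 < α * n + β := by positivity
  have hterm (n : ℕ) : b n * l ^ n * ((1 / s) ^ (α * n + β) * Gamma (α * n + β))
      = b n * Gamma (α * n + β) * (l / s ^ α) ^ n / s ^ β := by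
    rw [div_rpow zero_le_one hs.le, one_rpow, rpow_add hs, rpow_mul hs.le, rpow_natCast,
      div_pow]
    have : 0 < s ^ α := rpow_pos_of_pos hs α
    field_simp
  have hlaplace := hasSum_integral_tsum_rpow_mul_exp_neg_mul_Ioi hc hs
    ((hsum.div_const _).congr fun n => (hterm n).symm)
  have hintegrand : ∀ t ∈ Ioi (0 : ℝ),
      exp (-s * t) * t ^ (β - 1) * ∑' n : ℕ, b n * (l * t ^ α) ^ n
        = ∑' n : ℕ, b n * l ^ n * (t ^ (α * n + β - 1) * exp (-(s * t))) := by
    intro t ht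
    rw [← tsum_mul_left]
    refine tsum_congr fun n => ?_
    rw [show α * n + β - 1 = (β - 1) + α * n by ring, rpow_add ht, rpow_mul ht.le, rpow_natCast,
      mul_pow, neg_mul]
    ring
  rw [setIntegral_congr_fun measurableSet_Ioi hintegrand, ← hlaplace.tsum_eq, tsum_congr hterm,
    tsum_div_const]

end Real

/-- Laplace transform of the Prabhakar kernel: for `α, β, γ > 0`, `λ ∈ ℝ` and `s > 0`
with `sᵅ > |λ|`,
`∫₀^∞ e^{-st} t^{β-1} E^γ_{α,β}(λ tᵅ) dt = s^{αγ-β} / (sᵅ - λ)^γ`. -/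
theorem laplace_prabhakar
    (α β γ l : ℝ) (hα : 0 < α) (hβ : 0 < β) (hγ : 0 < γ) :
    ∀ s > (0 : ℝ), s ^ α > |l| →
      ∫ t in Set.Ioi (0 : ℝ),
          Real.exp (-s * t) * t ^ (β - 1) *
            ∑' n : ℕ,
              Real.Gamma (γ + n) / Real.Gamma γ * (l * t ^ α) ^ n /
                (n.factorial * Real.Gamma (α * n + β))
        = s ^ (α * γ - β) / (s ^ α - l) ^ γ := by
  intro s hs hsl
  have hsα : 0 < s ^ α := rpow_pos_of_pos hs α
  have hx : |l / s ^ α| < 1 := by rwa [abs_div, abs_of_pos hsα, div_lt_one hsα]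
  have hγ' (k : ℕ) : γ ≠ -k := by linarith [k.cast_nonneg (α := ℝ)]
  have hcoeff (n : ℕ) : Gamma (γ + n) / Gamma γ / (n.factorial * Gamma (α * n + β))
      * Gamma (α * n + β) * (l / s ^ α) ^ n
        = Gamma (γ + n) / n.factorial * (l / s ^ α) ^ n / Gamma γ := by
    have := (Gamma_pos_of_pos (by positivity : 0 < α * n + β)).ne'
    field_simp
  have hbinom := (hasSum_Gamma_add_nat_div_factorial_mul_pow hγ' hx).div_const (Gamma γ)
  simp_rw [mul_div_right_comm (Gamma (γ + _) / Gamma γ)]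
  rw [integral_exp_neg_mul_rpow_mul_tsum_pow_Ioi hα.le hβ hs
      (hbinom.summable.congr fun n => (hcoeff n).symm), tsum_congr hcoeff, hbinom.tsum_eq]
  have hsl' : 0 < s ^ α - l := by linarith [le_abs_self l]
  rw [one_sub_div hsα.ne', div_rpow hsl'.le hsα.le, ← rpow_mul hs.le, rpow_sub hs]
  have := (Gamma_pos_of_pos hγ).ne'
  field_simp
end
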